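/- arXiv:1908.07581 — 2 statements merged into one kernel-verified Lean document; each statement's English description precedes it below -/
import Mathlib

section
/- In the simultaneous-move reconstruction game for a k-out-of-n secret sharing scheme (1 < k < n) with greedy utilities, the strategy 'do not reveal your share' weakly dominates 'reveal your share' for every player. Formally: model each player i's strategy as a Boolean b_i (true = reveal). A player learns the secret iff either she reveals and at least k players reveal in total, or she does not reveal and at least k-1 other players reveal (her own share plus k-1 revealed shares suffice). Utility of player i is: 0 if no one learns the secret; 1 + (n - m) if player i learns the secret where m is the number of players who learn it; and -1 if player i does not learn the secret but someone else does. Then for every profile of the other players' strategies, player i's utility from not revealing is at least her utility from revealing, and there exists a profile of others' strategies (exactly k-1 others reveal) where not revealing gives strictly higher utility. -/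
/-- The set of players who reveal their share. -/
def revealers (n : ℕ) (s : Fin n → Bool) : Finset (Fin n) :=
  Finset.univ.filter fun j => s j = true

/-- Player `i` learns the secret: she reveals and at least `k` players reveal in total,
or she abstains and at least `k-1` *other* players reveal. -/
def learns (n k : ℕ) (s : Fin n → Bool) (i : Fin n) : Prop :=
  (s i = true ∧ k ≤ (revealers n s).card) ∨
  (s i = false ∧ k - 1 ≤ ((revealers n s).erase i).card)

instance (n k : ℕ) (s : Fin n → Bool) : DecidablePred (learns n k s) := fun i => by
  unfold learns; infer_instance

/-- Number of players who learn the secret. -/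
def numLearners (n k : ℕ) (s : Fin n → Bool) : ℕ :=
  (Finset.univ.filter fun j => learns n k s j).card

/-- Greedy utility: `0` if nobody learns; `1 + (n - m)` for a learner when `m` learn; `-1`
for a non-learner when someone learns. -/
def util (n k : ℕ) (s : Fin n → Bool) (i : Fin n) : ℤ :=
  if numLearners n k s = 0 then 0
  else if learns n k s i then 1 + ((n : ℤ) - (numLearners n k s : ℤ))
  else -1

section Reconstruction

open Finset Function

variable {n k : ℕ} {s t : Fin n → Bool} {i j : Fin n}

lemma revealers_mono (hst : s ≤ t) : revealers n s ⊆ revealers n t := by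
  intro j hj
  simp only [revealers, mem_filter, mem_univ, true_and] at hj ⊢
  exact top_le_iff.mp (hj.symm.trans_le (hst j))

lemma revealers_update_true (s : Fin n → Bool) (i : Fin n) :
    revealers n (update s i true) = insert i ((revealers n s).erase i) := by
  ext j
  by_cases hj : j = i <;> simp [revealers, update_apply, hj]

lemma revealers_update_false (s : Fin n → Bool) (i : Fin n) :
    revealers n (update s i false) = (revealers n s).erase i := by
  ext j
  by_cases hj : j = i <;> simp [revealers, update_apply, hj]

lemma exists_revealers_eq (T : Finset (Fin n)) : ∃ s, revealers n s = T :=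
  ⟨fun j => decide (j ∈ T), by ext; simp [revealers]⟩

lemma learns_mono (hst : s ≤ t) (hj : s j = t j) (h : learns n k s j) : learns n k t j := by
  have hsub := revealers_mono hst
  rcases h with ⟨hsj, hcard⟩ | ⟨hsj, hcard⟩
  · exact Or.inl ⟨hj ▸ hsj, hcard.trans (card_le_card hsub)⟩
  · exact Or.inr ⟨hj ▸ hsj, hcard.trans (card_le_card (erase_subset_erase _ hsub))⟩

lemma learns_of_le_card (h : k ≤ (revealers n s).card) : learns n k s j := by
  cases hj : s j
  · have hjR : j ∉ revealers n s := by simp [revealers, hj]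
    exact Or.inr ⟨hj, by rw [erase_eq_of_notMem hjR]; omega⟩
  · exact Or.inl ⟨hj, h⟩

lemma not_learns_of_card_lt (hj : s j = true) (h : (revealers n s).card < k) :
    ¬ learns n k s j := by
  rintro (⟨-, hcard⟩ | ⟨hj', -⟩)
  · omega
  · simp [hj] at hj'

lemma not_learns_of_card_lt_pred (h : (revealers n s).card < k - 1) : ¬ learns n k s j := by
  have := card_le_card (erase_subset j (revealers n s))
  rintro (⟨-, hcard⟩ | ⟨-, hcard⟩) <;> omega

lemma learns_update_true_self_iff :
    learns n k (update s i true) i ↔ k ≤ ((revealers n s).erase i).card + 1 := by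
  simp [learns, revealers_update_true]

lemma learns_update_false_self_iff :
    learns n k (update s i false) i ↔ k - 1 ≤ ((revealers n s).erase i).card := by
  simp [learns, revealers_update_false]

lemma numLearners_ne_zero (h : learns n k s j) : numLearners n k s ≠ 0 :=
  card_ne_zero_of_mem (mem_filter.mpr ⟨mem_univ j, h⟩)

lemma numLearners_eq_zero (h : (revealers n s).card < k - 1) : numLearners n k s = 0 :=
  card_eq_zero.mpr (filter_eq_empty_iff.mpr fun _ _ => not_learns_of_card_lt_pred h)

lemma numLearners_eq_of_le_card (h : k ≤ (revealers n s).card) : numLearners n k s = n := by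
  simp [numLearners, filter_true_of_mem fun j _ => learns_of_le_card (j := j) h]

lemma numLearners_lt_of_not_learns (h : ¬ learns n k s j) : numLearners n k s < n := by
  simpa [numLearners] using card_lt_card (filter_ssubset.mpr ⟨j, mem_univ j, h⟩)

lemma numLearners_mono (hst : ∀ j, learns n k s j → learns n k t j) :
    numLearners n k s ≤ numLearners n k t :=
  card_le_card (monotone_filter_right _ fun j _ => hst j)

lemma util_of_numLearners_eq_zero (h : numLearners n k s = 0) : util n k s i = 0 := by
  simp [util, h]

lemma util_of_learns (h : learns n k s i) :
    util n k s i = 1 + ((n : ℤ) - numLearners n k s) := by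
  simp [util, numLearners_ne_zero h, h]

lemma util_nonpos_of_not_learns (h : ¬ learns n k s i) : util n k s i ≤ 0 := by
  unfold util
  split_ifs <;> simp

/-- If the others already supply `k - 1` shares, revealing only adds learners and so dilutes
`i`'s payoff; otherwise abstaining leaves nobody learning, while revealing does not let `i` learn. -/
theorem util_update_true_le_util_update_false (s : Fin n → Bool) (i : Fin n) :
    util n k (update s i true) i ≤ util n k (update s i false) i := by
  by_cases hR : k - 1 ≤ ((revealers n s).erase i).card
  · have hf : learns n k (update s i false) i := learns_update_false_self_iff.mpr hR
    have ht : learns n k (update s i true) i := learns_update_true_self_iff.mpr (by omega)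
    have hle : numLearners n k (update s i false) ≤ numLearners n k (update s i true) := by
      refine numLearners_mono fun j hj => ?_
      rcases eq_or_ne j i with rfl | hji
      · exact ht
      · exact learns_mono (update_le_update_iff'.mpr (Bool.false_le _))
          (by simp [update_of_ne hji]) hj
    rw [util_of_learns ht, util_of_learns hf]
    omega
  · have h0 : numLearners n k (update s i false) = 0 :=
      numLearners_eq_zero (by rw [revealers_update_false]; omega)
    have ht : ¬ learns n k (update s i true) i :=
      fun h => hR (by have := learns_update_true_self_iff.mp h; omega)
    rw [util_of_numLearners_eq_zero h0]
    exact util_nonpos_of_not_learns ht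

/-- With exactly `k - 1` other revealers, revealing lets everybody learn (payoff `1`), while
abstaining lets `i` learn but not the other revealers (payoff above `1`). -/
theorem util_update_true_lt_util_update_false (hk : 1 < k)
    (hs : ((revealers n s).erase i).card = k - 1) :
    util n k (update s i true) i < util n k (update s i false) i := by
  have hRt : (revealers n (update s i true)).card = k := by
    rw [revealers_update_true, card_insert_of_notMem (notMem_erase i _)]
    omega
  obtain ⟨j, hjR⟩ : ((revealers n s).erase i).Nonempty := card_pos.mp (by omega)
  have hji : j ≠ i := ne_of_mem_erase hjR
  have hj : update s i false j = true := by
    rw [update_of_ne hji]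
    simpa [revealers] using mem_of_mem_erase hjR
  have hnj : ¬ learns n k (update s i false) j :=
    not_learns_of_card_lt hj (by rw [revealers_update_false]; omega)
  rw [util_of_learns (learns_of_le_card hRt.ge), numLearners_eq_of_le_card hRt.ge,
    util_of_learns (learns_update_false_self_iff.mpr hs.ge)]
  have := numLearners_lt_of_not_learns hnj
  omega

lemma exists_card_revealers_erase_eq (hk : k ≤ n) (i : Fin n) :
    ∃ s : Fin n → Bool, ((revealers n s).erase i).card = k - 1 := by
  obtain ⟨T, hTi, hT⟩ : ∃ T ⊆ univ.erase i, T.card = k - 1 :=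
    exists_subset_card_eq (by simp [card_erase_of_mem]; omega)
  obtain ⟨s, hs⟩ := exists_revealers_eq T
  refine ⟨s, ?_⟩
  rw [hs, erase_eq_of_notMem fun h => (mem_erase.mp (hTi h)).1 rfl, hT]

end Reconstruction

/-- Abstaining weakly dominates revealing for every player in the `k`-out-of-`n`
simultaneous reconstruction game with greedy utilities (`1 < k < n`), with a strict
improvement when exactly `k-1` of the other players reveal. -/
theorem stmt0 (n k : ℕ) (hk : 1 < k) (hkn : k < n) (i : Fin n) :
    (∀ s : Fin n → Bool,
      util n k (Function.update s i true) i ≤ util n k (Function.update s i false) i) ∧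
    (∃ s : Fin n → Bool, ((revealers n s).erase i).card = k - 1 ∧
      util n k (Function.update s i true) i < util n k (Function.update s i false) i) := by
  obtain ⟨s₀, hs₀⟩ := exists_card_revealers_erase_eq hkn.le i
  exact ⟨fun s => util_update_true_le_util_update_false s i,
    s₀, hs₀, util_update_true_lt_util_update_false hk hs₀⟩
end

section
/- For the 2-out-of-3 common-good reconstruction game with equal values N = N_1 = N_2 = N_3 and cost c with 0 < c < N/2: if all three players choose the same mixed strategy α ∈ (0,1) satisfying 2α(1−α)N = c, then this symmetric profile is a Nash equilibrium in which every player is inessential (each player's expected utility is independent of her own strategy). -/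
/-!
A player's expected utility is affine in her own participation probability `x`: conditioning on
the coalition `S` of the others, participating only matters when `S` is unauthorized but
`S ∪ {i}` is authorized, so for a monotone access structure the utility is
`N·P(others authorized) + x·(N·pivot − c)`. When `N·pivot = c` the slope vanishes, so every
player is indifferent and in particular best-responds; for the 2-out-of-3 structure with a
common `α` the pivotality probability is `2α(1−α)`.
-/

/-- Product-Bernoulli weight of a coalition `S`: each player `j` participates independently
with probability `α j`. -/
def coalWt (n : ℕ) (α : Fin n → ℝ) (S : Finset (Fin n)) : ℝ :=
  ∏ j, if j ∈ S then α j else 1 - α j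

/-- Probability that the random coalition of participants is authorized. -/
def probAuth (n : ℕ) (Γ : Finset (Fin n) → Prop) [DecidablePred Γ]
    (α : Fin n → ℝ) : ℝ :=
  ∑ S : Finset (Fin n), if Γ S then coalWt n α S else 0

/-- Expected utility of player `i` in the common-good reconstruction game (V1–V2):
value `N i` if the coalition of participants is authorized, minus participation cost `c`. -/
def Eutil (n : ℕ) (Γ : Finset (Fin n) → Prop) [DecidablePred Γ]
    (N : Fin n → ℝ) (c : ℝ) (α : Fin n → ℝ) (i : Fin n) : ℝ :=
  N i * probAuth n Γ α - c * α i

/-- Pivotality probability of player `i`: the coalition `S` of *other* participants is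
unauthorized but `S ∪ {i}` is authorized. -/
def pivot (n : ℕ) (Γ : Finset (Fin n) → Prop) [DecidablePred Γ]
    (α : Fin n → ℝ) (i : Fin n) : ℝ :=
  ∑ S ∈ (Finset.univ.erase i).powerset,
    if ¬ Γ S ∧ Γ (insert i S) then
      ∏ j ∈ Finset.univ.erase i, (if j ∈ S then α j else 1 - α j)
    else 0

/-- Probability that the coalition of *other* participants is already authorized. -/
def authWithout (n : ℕ) (Γ : Finset (Fin n) → Prop) [DecidablePred Γ]
    (α : Fin n → ℝ) (i : Fin n) : ℝ :=
  ∑ S ∈ (Finset.univ.erase i).powerset,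
    if Γ S then ∏ j ∈ Finset.univ.erase i, (if j ∈ S then α j else 1 - α j) else 0

/-- Set of participants of a pure strategy profile. -/
def parts (n : ℕ) (s : Fin n → Bool) : Finset (Fin n) :=
  Finset.univ.filter fun i => s i = true

/-- Pure-strategy utility in the common-good game. -/
def uPure (n : ℕ) (Γ : Finset (Fin n) → Prop) [DecidablePred Γ]
    (N : Fin n → ℝ) (c : ℝ) (s : Fin n → Bool) (i : Fin n) : ℝ :=
  (if Γ (parts n s) then N i else 0) - (if s i then c else 0)

open Finset

section

variable {n : ℕ} {Γ : Finset (Fin n) → Prop} [DecidablePred Γ]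

lemma probAuth_update (hΓ : Monotone Γ) (α : Fin n → ℝ) (i : Fin n) (x : ℝ) :
    probAuth n Γ (Function.update α i x) = authWithout n Γ α i + x * pivot n Γ α i := by
  set w : Finset (Fin n) → ℝ := fun S => ∏ j ∈ univ.erase i, if j ∈ S then α j else 1 - α j
  have hwt : ∀ S ⊆ univ.erase i,
      coalWt n (Function.update α i x) S = (1 - x) * w S ∧
      coalWt n (Function.update α i x) (insert i S) = x * w S := by
    intro S hS
    have hi : i ∉ S := fun h => by simpa using hS h
    simp only [coalWt, ← mul_prod_erase univ _ (mem_univ i), mem_insert_self, if_true, hi,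
      if_false, Function.update_self, w]
    constructor <;> congr 1 <;> refine prod_congr rfl fun j hj => ?_ <;>
      simp [ne_of_mem_erase hj]
  rw [probAuth, ← powerset_univ, ← insert_erase (mem_univ i),
    sum_powerset_insert (notMem_erase i univ), authWithout, pivot, mul_sum, ← sum_add_distrib,
    ← sum_add_distrib]
  refine sum_congr rfl fun S hSi => ?_
  obtain ⟨hout, hin⟩ := hwt S (mem_powerset.mp hSi)
  rw [hout, hin]
  by_cases hS : Γ S
  · simp only [hS, hΓ (subset_insert i S) hS, not_true, false_and, if_true, if_false]
    ring
  · by_cases hiS : Γ (insert i S) <;> simp [hS, hiS, w]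

lemma Eutil_update (hΓ : Monotone Γ) (N : Fin n → ℝ) (c : ℝ) (α : Fin n → ℝ) (i : Fin n)
    (x : ℝ) :
    Eutil n Γ N c (Function.update α i x) i =
      N i * authWithout n Γ α i + x * (N i * pivot n Γ α i - c) := by
  rw [Eutil, probAuth_update hΓ, Function.update_self]
  ring

lemma Eutil_update_eq_of_mul_pivot_eq (hΓ : Monotone Γ) {N : Fin n → ℝ} {c : ℝ}
    {α : Fin n → ℝ} {i : Fin n} (hpiv : N i * pivot n Γ α i = c) (x y : ℝ) :
    Eutil n Γ N c (Function.update α i x) i = Eutil n Γ N c (Function.update α i y) i := by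
  simp only [Eutil_update hΓ, hpiv, sub_self, mul_zero]

end

lemma pivot_two_le_card_three (α : ℝ) (i : Fin 3) :
    pivot 3 (fun S => 2 ≤ S.card) (fun _ => α) i = 2 * α * (1 - α) := by
  obtain ⟨j, k, hjk, hij, hik, herase⟩ :
      ∃ j k : Fin 3, j ≠ k ∧ i ≠ j ∧ i ≠ k ∧ univ.erase i = {j, k} := by
    fin_cases i <;> decide
  rw [pivot, herase, sum_powerset_insert (by simpa using hjk), ← insert_empty,
    sum_powerset_insert (notMem_empty k), sum_powerset_insert (notMem_empty k)]
  simp [prod_insert, card_insert_of_notMem, hjk, hjk.symm, hij, hik, pair_comm j k]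
  ring

theorem stmt6_general (N c : ℝ)
    (α : ℝ) (heq : 2 * α * (1 - α) * N = c) :
    let Γ : Finset (Fin 3) → Prop := fun S => 2 ≤ S.card
    let prof : Fin 3 → ℝ := fun _ => α
    let Nv : Fin 3 → ℝ := fun _ => N
    (∀ i : Fin 3, pivot 3 Γ prof i = 2 * α * (1 - α)) ∧
    (∀ i : Fin 3, ∀ x y : ℝ,
      Eutil 3 Γ Nv c (Function.update prof i x) i =
        Eutil 3 Γ Nv c (Function.update prof i y) i) ∧
    (∀ i : Fin 3, ∀ x ∈ Set.Icc (0 : ℝ) 1,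
      Eutil 3 Γ Nv c (Function.update prof i x) i ≤ Eutil 3 Γ Nv c prof i) := by
  intro Γ prof Nv
  have hΓ : Monotone Γ := fun S T hST hS => hS.trans (card_le_card hST)
  have hinessential : ∀ i, Nv i * pivot 3 Γ prof i = c := fun i => by
    rw [pivot_two_le_card_three]
    linarith
  refine ⟨pivot_two_le_card_three α, fun i => Eutil_update_eq_of_mul_pivot_eq hΓ (hinessential i),
    fun i x _ => ?_⟩
  have h := Eutil_update_eq_of_mul_pivot_eq hΓ (hinessential i) x (prof i)
  rw [Function.update_eq_self] at h
  exact h.le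

/-- For the 2-out-of-3 common-good game with equal values `N` and cost `c` with
`0 < c < N/2`: if all three players play the same mixed strategy `α ∈ (0,1)` with
`2α(1-α)N = c`, the symmetric profile is a Nash equilibrium in which every player is
inessential (her expected utility does not depend on her own strategy). -/
theorem stmt6 (N c : ℝ) (hc : 0 < c) (hcN : c < N / 2)
    (α : ℝ) (hα : α ∈ Set.Ioo (0 : ℝ) 1) (heq : 2 * α * (1 - α) * N = c) :
    let Γ : Finset (Fin 3) → Prop := fun S => 2 ≤ S.card
    let prof : Fin 3 → ℝ := fun _ => α
    let Nv : Fin 3 → ℝ := fun _ => N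
    (∀ i : Fin 3, pivot 3 Γ prof i = 2 * α * (1 - α)) ∧
    (∀ i : Fin 3, ∀ x y : ℝ,
      Eutil 3 Γ Nv c (Function.update prof i x) i =
        Eutil 3 Γ Nv c (Function.update prof i y) i) ∧
    (∀ i : Fin 3, ∀ x ∈ Set.Icc (0 : ℝ) 1,
      Eutil 3 Γ Nv c (Function.update prof i x) i ≤ Eutil 3 Γ Nv c prof i) :=
  stmt6_general N c α heq
end
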